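/- arXiv:2311.01591 — 3 statements merged into one kernel-verified Lean document; each statement's English description precedes it below -/
import Mathlib

section
/- Let α be a finite type and let p, q : α → ℝ satisfy p h > 0 and q h > 0 for all h. Then for every function D : α → ℝ with 0 < D h < 1 for all h, Σ_h (p h · log(D h) + q h · log(1 − D h)) ≤ Σ_h (p h · log(p h/(p h + q h)) + q h · log(q h/(p h + q h))), with equality if and only if D h = p h/(p h + q h) for all h. -/
/-!
Pointwise in `h`, with `a = p h`, `b = q h` and `c = a / (a + b)`, the gap between the optimum and
the value at `x = D h` is `a · φ(x / c) + b · φ((1 - x) / (1 - c))` with `φ t = t - 1 - log t`: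
the linear parts `a (x / c - 1) + b ((1 - x) / (1 - c) - 1)` cancel exactly. Since `φ ≥ 0` with
equality only at `t = 1`, the gap is nonnegative and vanishes iff `x = c`; summing over `h` gives
the theorem.
-/

open Real Finset

section

variable {a b x t : ℝ}

lemma sub_one_sub_log_nonneg (ht : 0 < t) : 0 ≤ t - 1 - log t := by
  linarith [log_le_sub_one_of_pos ht]

lemma sub_one_sub_log_eq_zero_iff (ht : 0 < t) : t - 1 - log t = 0 ↔ t = 1 := by
  refine ⟨fun h => by_contra fun hne => ?_, fun h => by simp [h]⟩
  linarith [log_lt_sub_one_of_pos ht hne]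

lemma mul_log_add_mul_log_one_sub_gap (ha : 0 < a) (hb : 0 < b) (hx : 0 < x) (hx1 : x < 1) :
    a * log (a / (a + b)) + b * log (b / (a + b)) - (a * log x + b * log (1 - x)) =
      a * ((a + b) * x / a - 1 - log ((a + b) * x / a)) +
        b * ((a + b) * (1 - x) / b - 1 - log ((a + b) * (1 - x) / b)) := by
  have hab : a + b ≠ 0 := by positivity
  have h1x : 1 - x ≠ 0 := by linarith
  rw [log_div ha.ne' hab, log_div hb.ne' hab, log_div (by positivity) ha.ne',
    log_div (mul_ne_zero hab h1x) hb.ne', log_mul hab hx.ne', log_mul hab h1x]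
  field_simp
  ring

lemma mul_log_add_mul_log_one_sub_le (ha : 0 < a) (hb : 0 < b) (hx : 0 < x) (hx1 : x < 1) :
    a * log x + b * log (1 - x) ≤ a * log (a / (a + b)) + b * log (b / (a + b)) := by
  have ht₁ : 0 < (a + b) * x / a := by positivity
  have ht₂ : 0 < (a + b) * (1 - x) / b := div_pos (mul_pos (by positivity) (by linarith)) hb
  rw [← sub_nonneg, mul_log_add_mul_log_one_sub_gap ha hb hx hx1]
  exact add_nonneg (mul_nonneg ha.le (sub_one_sub_log_nonneg ht₁))
    (mul_nonneg hb.le (sub_one_sub_log_nonneg ht₂))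

lemma mul_log_add_mul_log_one_sub_eq_iff (ha : 0 < a) (hb : 0 < b) (hx : 0 < x) (hx1 : x < 1) :
    a * log x + b * log (1 - x) = a * log (a / (a + b)) + b * log (b / (a + b)) ↔
      x = a / (a + b) := by
  have hab : 0 < a + b := by positivity
  have ht₁ : 0 < (a + b) * x / a := by positivity
  have ht₂ : 0 < (a + b) * (1 - x) / b := div_pos (mul_pos hab (by linarith)) hb
  rw [eq_comm, ← sub_eq_zero, mul_log_add_mul_log_one_sub_gap ha hb hx hx1,
    add_eq_zero_iff_of_nonneg (mul_nonneg ha.le (sub_one_sub_log_nonneg ht₁))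
      (mul_nonneg hb.le (sub_one_sub_log_nonneg ht₂)),
    mul_eq_zero, mul_eq_zero, or_iff_right ha.ne', or_iff_right hb.ne',
    sub_one_sub_log_eq_zero_iff ht₁, sub_one_sub_log_eq_zero_iff ht₂,
    div_eq_one_iff_eq ha.ne', div_eq_one_iff_eq hb.ne', eq_div_iff hab.ne']
  constructor
  · exact fun h => by linarith [h.1]
  · exact fun h => ⟨by linarith, by linarith⟩

end

/-- Functional form of the optimal-discriminator step: for strictly positive weight
functions `p, q` on a finite type, any discriminator `D` with values in `(0,1)` satisfies
`∑ (p·log D + q·log (1−D)) ≤ ∑ (p·log (p/(p+q)) + q·log (q/(p+q)))`,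
with equality iff `D = p/(p+q)` pointwise. -/
theorem bfts_optimal_discriminator (α : Type*) [Fintype α] (p q : α → ℝ)
    (hp : ∀ h, 0 < p h) (hq : ∀ h, 0 < q h) :
    ∀ D : α → ℝ, (∀ h, 0 < D h ∧ D h < 1) →
      (∑ h, (p h * Real.log (D h) + q h * Real.log (1 - D h)) ≤
        ∑ h, (p h * Real.log (p h / (p h + q h)) + q h * Real.log (q h / (p h + q h)))) ∧
      ((∑ h, (p h * Real.log (D h) + q h * Real.log (1 - D h)) =
        ∑ h, (p h * Real.log (p h / (p h + q h)) + q h * Real.log (q h / (p h + q h)))) ↔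
        ∀ h, D h = p h / (p h + q h)) := by
  intro D hD
  have hle : ∀ h ∈ univ, p h * log (D h) + q h * log (1 - D h) ≤
      p h * log (p h / (p h + q h)) + q h * log (q h / (p h + q h)) := fun h _ =>
    mul_log_add_mul_log_one_sub_le (hp h) (hq h) (hD h).1 (hD h).2
  refine ⟨sum_le_sum hle, ?_⟩
  rw [sum_eq_sum_iff_of_le hle]
  simp only [mem_univ, forall_const]
  exact forall_congr' fun h =>
    mul_log_add_mul_log_one_sub_eq_iff (hp h) (hq h) (hD h).1 (hD h).2
end

section
/- Let p, q : α → ℝ be probability mass functions on a finite type α with full support, i.e., p h > 0 and q h > 0 for all h. Then Σ_h p h · log(p h/(p h + q h)) + Σ_h q h · log(q h/(p h + q h)) ≥ −log 4, with equality if and only if p = q. -/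
open Real Finset InformationTheory

/-!
With `m = (p + q) / 2`, the objective equals `KL(p ‖ m) + KL(q ‖ m) - log 4`. Both divergences
are nonnegative by Gibbs' inequality and vanish exactly when `p = m` and `q = m`, i.e. when `p = q`.
-/

section Gibbs

variable {ι : Type*} [Fintype ι] {p q : ι → ℝ}

lemma mul_klFun_div {a b : ℝ} (hb : b ≠ 0) : b * klFun (a / b) = a * log (a / b) + b - a := by
  rw [klFun_apply]
  field_simp

lemma sum_mul_log_div_eq_sum_mul_klFun (hq : ∀ i, q i ≠ 0) (hpq : ∑ i, p i = ∑ i, q i) :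
    ∑ i, p i * log (p i / q i) = ∑ i, q i * klFun (p i / q i) := by
  simp only [mul_klFun_div (hq _), sum_sub_distrib, sum_add_distrib, hpq, add_sub_cancel_right]

lemma sum_mul_log_div_nonneg (hp : ∀ i, 0 ≤ p i) (hq : ∀ i, 0 < q i)
    (hpq : ∑ i, p i = ∑ i, q i) : 0 ≤ ∑ i, p i * log (p i / q i) := by
  rw [sum_mul_log_div_eq_sum_mul_klFun (fun i ↦ (hq i).ne') hpq]
  exact sum_nonneg fun i _ ↦ mul_nonneg (hq i).le (klFun_nonneg (div_nonneg (hp i) (hq i).le))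

lemma sum_mul_log_div_eq_zero_iff (hp : ∀ i, 0 ≤ p i) (hq : ∀ i, 0 < q i)
    (hpq : ∑ i, p i = ∑ i, q i) : ∑ i, p i * log (p i / q i) = 0 ↔ p = q := by
  have hdiv : ∀ i, 0 ≤ p i / q i := fun i ↦ div_nonneg (hp i) (hq i).le
  rw [sum_mul_log_div_eq_sum_mul_klFun (fun i ↦ (hq i).ne') hpq,
    sum_eq_zero_iff_of_nonneg fun i _ ↦ mul_nonneg (hq i).le (klFun_nonneg (hdiv i)), funext_iff]
  refine forall_congr' fun i ↦ ?_
  rw [mul_eq_zero_iff_left (hq i).ne', klFun_eq_zero_iff (hdiv i), div_eq_one_iff_eq (hq i).ne',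
    forall_prop_of_true (mem_univ i)]

end Gibbs

lemma sum_mul_log_div_const_mul {ι : Type*} [Fintype ι] {r m : ι → ℝ} {c : ℝ}
    (hr : ∀ i, r i ≠ 0) (hm : ∀ i, m i ≠ 0) (hc : c ≠ 0) (hr1 : ∑ i, r i = 1) :
    ∑ i, r i * log (r i / (c * m i)) = ∑ i, r i * log (r i / m i) - log c := by
  have hterm : ∀ i, r i * log (r i / (c * m i)) = r i * log (r i / m i) - r i * log c := by
    intro i
    rw [log_div (hr i) (mul_ne_zero hc (hm i)), log_div (hr i) (hm i), log_mul hc (hm i)]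
    ring
  simp only [hterm, sum_sub_distrib, ← sum_mul, hr1, one_mul]

/-- Lower bound on the BFtS adversarial objective at the optimal discriminator:
the value `−log 4` is achieved exactly when `p = q` (demographic parity). -/
theorem bfts_objective_ge_neg_log_four (α : Type*) [Fintype α] (p q : α → ℝ)
    (hp : ∀ h, 0 < p h) (hq : ∀ h, 0 < q h)
    (hp1 : ∑ h, p h = 1) (hq1 : ∑ h, q h = 1) :
    -Real.log 4 ≤
      ∑ h, p h * Real.log (p h / (p h + q h)) + ∑ h, q h * Real.log (q h / (p h + q h)) ∧
    (∑ h, p h * Real.log (p h / (p h + q h)) + ∑ h, q h * Real.log (q h / (p h + q h)) =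
      -Real.log 4 ↔ p = q) := by
  set m : α → ℝ := fun h ↦ (p h + q h) / 2
  have hm : ∀ h, 0 < m h := fun h ↦ half_pos (add_pos (hp h) (hq h))
  have hm1 : ∑ h, m h = 1 := by simp only [m, ← sum_div, sum_add_distrib, hp1, hq1]; norm_num
  have hpq : ∀ h, p h + q h = 2 * m h := fun h ↦ (mul_div_cancel₀ _ two_ne_zero).symm
  have hm0 : ∀ h, m h ≠ 0 := fun h ↦ (hm h).ne'
  simp only [hpq, sum_mul_log_div_const_mul (fun h ↦ (hp h).ne') hm0 two_ne_zero hp1,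
    sum_mul_log_div_const_mul (fun h ↦ (hq h).ne') hm0 two_ne_zero hq1]
  have hlog4 : log 4 = 2 * log 2 := by
    rw [show (4 : ℝ) = 2 ^ 2 by norm_num, log_pow, Nat.cast_ofNat]
  have hP := sum_mul_log_div_nonneg (fun h ↦ (hp h).le) hm (hp1.trans hm1.symm)
  have hQ := sum_mul_log_div_nonneg (fun h ↦ (hq h).le) hm (hq1.trans hm1.symm)
  have hPm := sum_mul_log_div_eq_zero_iff (fun h ↦ (hp h).le) hm (hp1.trans hm1.symm)
  have hQm := sum_mul_log_div_eq_zero_iff (fun h ↦ (hq h).le) hm (hq1.trans hm1.symm)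
  refine ⟨by linarith, ?_⟩
  calc _ ↔ ∑ h, p h * log (p h / m h) + ∑ h, q h * log (q h / m h) = 0 := by
        constructor <;> intro h <;> linarith
    _ ↔ ∑ h, p h * log (p h / m h) = 0 ∧ ∑ h, q h * log (q h / m h) = 0 :=
        add_eq_zero_iff_of_nonneg hP hQ
    _ ↔ p = m ∧ q = m := and_congr hPm hQm
    _ ↔ p = q := by
        simp only [m, funext_iff, ← forall_and]
        exact forall_congr' fun h ↦
          ⟨fun ⟨h₁, _⟩ ↦ by linarith, fun h₁ ↦ ⟨by linarith, by linarith⟩⟩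
end

section
/- For a fixed p ∈ [0,1], the map q ↦ JS(Ber p, Ber q) is monotone nondecreasing on [p,1] and monotone nonincreasing on [0,p]: if p ≤ q₁ ≤ q₂ ≤ 1 then JS(Ber p, Ber q₁) ≤ JS(Ber p, Ber q₂), and if 0 ≤ q₁ ≤ q₂ ≤ p then JS(Ber p, Ber q₂) ≤ JS(Ber p, Ber q₁). -/
open Real Finset

/-- Jensen–Shannon divergence between two probability mass functions on a finite type. -/
noncomputable def JS {α : Type*} [Fintype α] (p q : α → ℝ) : ℝ :=
  (1/2) * ∑ h, p h * Real.log (2 * p h / (p h + q h)) +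
  (1/2) * ∑ h, q h * Real.log (2 * q h / (p h + q h))

/-- Bernoulli probability mass function on `Bool`. -/
noncomputable def Ber (a : ℝ) : Bool → ℝ := fun b => if b then a else 1 - a

/-!
With `φ x = x log x`, `2 JS(Ber p, Ber q)` is `φ q + φ (1 - q) - φ (p + q) - φ (2 - p - q)` up to
terms not depending on `q`. Its `q`-derivative is `log (q (2 - p - q)) - log ((1 - q) (p + q))`,
and `q (2 - p - q) - (1 - q) (p + q) = q - p`, so it has the sign of `q - p`. The decreasing half
follows from the increasing one by swapping the two labels of `Bool`, which replaces `p, q` by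
`1 - p, 1 - q`.
-/

lemma JS_comp_equiv {α β : Type*} [Fintype α] [Fintype β] (e : β ≃ α) (p q : α → ℝ) :
    JS (p ∘ e) (q ∘ e) = JS p q := by
  simp only [JS, Function.comp_apply, Equiv.sum_comp e
    (fun h => p h * log (2 * p h / (p h + q h))),
    Equiv.sum_comp e (fun h => q h * log (2 * q h / (p h + q h)))]

lemma Ber_one_sub (a : ℝ) : Ber (1 - a) = Ber a ∘ Equiv.boolNot := by
  funext b
  cases b <;> simp [Ber]

lemma JS_Ber_one_sub (p q : ℝ) : JS (Ber (1 - p)) (Ber (1 - q)) = JS (Ber p) (Ber q) := by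
  rw [Ber_one_sub, Ber_one_sub, JS_comp_equiv]

lemma mul_log_mul_div {x c u : ℝ} (hc : c ≠ 0) (hu : u = 0 → x = 0) :
    x * log (c * x / u) = x * log x + x * log c - x * log u := by
  rcases eq_or_ne x 0 with rfl | hx
  · simp
  · rw [log_div (mul_ne_zero hc hx) (mt hu hx), log_mul hc hx]
    ring

/-- The part of `2 * JS (Ber p) (Ber q)` that depends on `q`. -/
noncomputable def jsBerProfile (p q : ℝ) : ℝ :=
  q * log q + (1 - q) * log (1 - q) - (p + q) * log (p + q) - (2 - p - q) * log (2 - p - q)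

lemma two_mul_JS_Ber {p q : ℝ} (hp : p ∈ Set.Icc (0 : ℝ) 1) (hq : q ∈ Set.Icc (0 : ℝ) 1) :
    2 * JS (Ber p) (Ber q) = p * log p + (1 - p) * log (1 - p) + 2 * log 2 + jsBerProfile p q := by
  obtain ⟨hp0, hp1⟩ := hp
  obtain ⟨hq0, hq1⟩ := hq
  have hsum : 1 - p + (1 - q) = 2 - p - q := by ring
  simp only [JS, Ber, Fintype.sum_bool, if_true, Bool.false_eq_true, if_false, hsum]
  rw [mul_log_mul_div two_ne_zero fun _ => by linarith,
    mul_log_mul_div two_ne_zero fun _ => by linarith,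
    mul_log_mul_div two_ne_zero fun _ => by linarith,
    mul_log_mul_div two_ne_zero fun _ => by linarith, jsBerProfile]
  ring

lemma HasDerivAt.mul_log {f : ℝ → ℝ} {f' x : ℝ} (hf : HasDerivAt f f' x) (hx : f x ≠ 0) :
    HasDerivAt (fun y => f y * Real.log (f y)) ((Real.log (f x) + 1) * f') x :=
  (hasDerivAt_mul_log hx).comp x hf

lemma hasDerivAt_jsBerProfile {p q : ℝ} (hq : q ≠ 0) (hq' : 1 - q ≠ 0) (hpq : p + q ≠ 0)
    (hpq' : 2 - p - q ≠ 0) :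
    HasDerivAt (jsBerProfile p)
      (log q - log (1 - q) - log (p + q) + log (2 - p - q)) q := by
  have hid : HasDerivAt (fun x : ℝ => x) 1 q := hasDerivAt_id' q
  exact ((((hid.mul_log hq).add ((hid.const_sub 1).mul_log hq')).sub
    ((hid.const_add p).mul_log hpq)).sub ((hid.const_sub (2 - p)).mul_log hpq')).congr_deriv
    (by ring)

lemma monotoneOn_jsBerProfile {p : ℝ} (hp : 0 ≤ p) :
    MonotoneOn (jsBerProfile p) (Set.Icc p 1) := by
  refine monotoneOn_of_hasDerivWithinAt_nonneg (convex_Icc p 1)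
    (f' := fun q => log q - log (1 - q) - log (p + q) + log (2 - p - q))
    (by unfold jsBerProfile; fun_prop) (fun q hq => ?_) (fun q hq => ?_)
  all_goals
    rw [interior_Icc] at hq
    obtain ⟨hpq, hq1⟩ := hq
  · exact (hasDerivAt_jsBerProfile (by linarith) (by linarith) (by linarith)
      (by linarith)).hasDerivWithinAt
  · have hkey : log ((1 - q) * (p + q)) ≤ log (q * (2 - p - q)) :=
      log_le_log (by nlinarith) (by nlinarith)
    rw [log_mul (by linarith) (by linarith), log_mul (by linarith) (by linarith)] at hkey
    linarith

lemma JS_Ber_monotoneOn {p : ℝ} (hp : p ∈ Set.Icc (0 : ℝ) 1) :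
    MonotoneOn (fun q => JS (Ber p) (Ber q)) (Set.Icc p 1) := by
  intro q₁ hq₁ q₂ hq₂ hq
  have hmem {q : ℝ} (hq : q ∈ Set.Icc p 1) : q ∈ Set.Icc (0 : ℝ) 1 := ⟨hp.1.trans hq.1, hq.2⟩
  have := monotoneOn_jsBerProfile hp.1 hq₁ hq₂ hq
  linarith [two_mul_JS_Ber hp (hmem hq₁), two_mul_JS_Ber hp (hmem hq₂)]

/-- For fixed `p ∈ [0,1]`, the map `q ↦ JS (Ber p) (Ber q)` is nondecreasing on `[p,1]`
and nonincreasing on `[0,p]`. -/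
theorem JS_Ber_monotone (p : ℝ) (hp : p ∈ Set.Icc (0:ℝ) 1) :
    (∀ q₁ q₂ : ℝ, p ≤ q₁ → q₁ ≤ q₂ → q₂ ≤ 1 →
      JS (Ber p) (Ber q₁) ≤ JS (Ber p) (Ber q₂)) ∧
    (∀ q₁ q₂ : ℝ, 0 ≤ q₁ → q₁ ≤ q₂ → q₂ ≤ p →
      JS (Ber p) (Ber q₂) ≤ JS (Ber p) (Ber q₁)) := by
  refine ⟨fun q₁ q₂ h₁ h₁₂ h₂ => JS_Ber_monotoneOn hp ⟨h₁, h₁₂.trans h₂⟩ ⟨h₁.trans h₁₂, h₂⟩ h₁₂,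
    fun q₁ q₂ h₁ h₁₂ h₂ => ?_⟩
  obtain ⟨hp0, hp1⟩ := hp
  rw [← JS_Ber_one_sub p q₂, ← JS_Ber_one_sub p q₁]
  exact JS_Ber_monotoneOn ⟨by linarith, by linarith⟩ ⟨by linarith, by linarith⟩
    ⟨by linarith, by linarith⟩ (by linarith)
end
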